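/- arXiv:1204.6545 — 2 statements merged into one kernel-verified Lean document; each statement's English description precedes it below -/
import Mathlib

section
/- If f has mean zero and is nonzero, then g = f + c·v (v ∈ ∂B(f)) and h = argmin_u { T(u) + E(f)‖u − g‖₂²/(2c) } both have mean zero and are nonzero. -/
/-!
Shifting by a constant changes neither `T` nor `B`, so a subgradient `v` of `B` at `f` sums to
zero and `g = f + c v` keeps mean zero; the subgradient inequality tested at `0` gives
`⟨v, f⟩ ≥ B(f) > 0`, which rules out `g = 0`. As `g` has mean zero, replacing `h` by
`h - mean h` leaves `T(h)` unchanged and lowers `‖h - g‖²` by `n · (mean h)²`, so minimality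
forces `mean h = 0`. On a connected graph `E(f) > 0`, and the objective at `0` exceeds the one
at `f` by `E(f)‖f‖²/(2c) + E(f)⟨v, f⟩ - T(f) ≥ E(f)‖f‖²/(2c) > 0`, so `h ≠ 0`.
-/

open Finset Filter Topology

noncomputable def meanV {n : ℕ} (f : Fin n → ℝ) : ℝ := (∑ i, f i) / n
noncomputable def TVfun {n : ℕ} (w : Fin n → Fin n → ℝ) (f : Fin n → ℝ) : ℝ :=
  (1/2) * ∑ i, ∑ j, w i j * |f i - f j|
noncomputable def Bfun {n : ℕ} (f : Fin n → ℝ) : ℝ := ∑ i, |f i - meanV f|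
noncomputable def Efun {n : ℕ} (w : Fin n → Fin n → ℝ) (f : Fin n → ℝ) : ℝ :=
  TVfun w f / Bfun f
noncomputable def norm2 {n : ℕ} (f : Fin n → ℝ) : ℝ := Real.sqrt (∑ i, (f i)^2)
noncomputable def dotV {n : ℕ} (u v : Fin n → ℝ) : ℝ := ∑ i, u i * v i
def IsSubgradient {n : ℕ} (F : (Fin n → ℝ) → ℝ) (f v : Fin n → ℝ) : Prop :=
  ∀ y, F f + dotV v (y - f) ≤ F y
def GraphConnected {n : ℕ} (w : Fin n → Fin n → ℝ) : Prop :=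
  ∀ i j : Fin n, Relation.ReflTransGen (fun a b => 0 < w a b) i j
def Nonconstant {n : ℕ} (f : Fin n → ℝ) : Prop := ∃ i j, f i ≠ f j
def signSet (t : ℝ) : Set ℝ := if t > 0 then {1} else if t < 0 then {-1} else Set.Icc (-1) 1
noncomputable def P0 {n : ℕ} (f : Fin n → ℝ) : Fin n → ℝ := fun i => f i - meanV f

namespace GraphConnected

variable {n : ℕ} {w : Fin n → Fin n → ℝ}

theorem eq_of_forall_pos_weight (hconn : GraphConnected w) {f : Fin n → ℝ}
    (hf : ∀ i j, 0 < w i j → f i = f j) (i j : Fin n) : f i = f j :=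
  Relation.reflTransGen_eq_self.le _ _ ((hconn i j).lift f hf)

theorem exists_pos_weight_of_nonconstant (hconn : GraphConnected w) {f : Fin n → ℝ}
    (hf : Nonconstant f) : ∃ i j, 0 < w i j ∧ f i ≠ f j := by
  by_contra! h
  obtain ⟨i, j, hij⟩ := hf
  exact hij (hconn.eq_of_forall_pos_weight h i j)

end GraphConnected

section Vectors

variable {n : ℕ}

theorem sum_eq_mul_meanV (f : Fin n → ℝ) : ∑ i, f i = n * meanV f := by
  rcases eq_or_ne n 0 with rfl | hn
  · simp
  · rw [meanV, mul_div_cancel₀ _ (Nat.cast_ne_zero.2 hn)]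

theorem meanV_eq_zero_iff {f : Fin n → ℝ} : meanV f = 0 ↔ ∑ i, f i = 0 := by
  rcases eq_or_ne n 0 with rfl | hn
  · simp [meanV]
  · simp [meanV, hn]

theorem meanV_add_const [NeZero n] (f : Fin n → ℝ) (t : ℝ) :
    meanV (fun i => f i + t) = meanV f + t := by
  simp [meanV, sum_add_distrib, add_div, NeZero.ne]

theorem nonconstant_of_meanV_eq_zero {f : Fin n → ℝ} (hmean : meanV f = 0) (hf : f ≠ 0) :
    Nonconstant f := by
  obtain ⟨i, hi⟩ := Function.ne_iff.1 hf
  by_contra hconst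
  simp only [Nonconstant, not_exists, not_not] at hconst
  have hn : (n : ℝ) ≠ 0 := Nat.cast_ne_zero.2 (Fin.pos i).ne'
  have hsum : ∑ j, f j = n * f i := by simp [hconst _ i]
  rw [meanV_eq_zero_iff, hsum] at hmean
  exact hi (by simpa [hn] using hmean)

theorem norm2_sq (u : Fin n → ℝ) : norm2 u ^ 2 = ∑ i, u i ^ 2 :=
  Real.sq_sqrt (sum_nonneg fun _ _ => sq_nonneg _)

theorem norm2_sq_pos {u : Fin n → ℝ} (hu : u ≠ 0) : 0 < norm2 u ^ 2 := by
  obtain ⟨i, hi⟩ := Function.ne_iff.1 hu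
  rw [norm2_sq]
  exact sum_pos' (fun j _ => sq_nonneg _) ⟨i, mem_univ _, sq_pos_of_ne_zero hi⟩

end Vectors

section Functionals

variable {n : ℕ}

theorem Bfun_add_const (f : Fin n → ℝ) (t : ℝ) : Bfun (fun i => f i + t) = Bfun f := by
  rcases eq_or_ne n 0 with rfl | hn
  · simp [Bfun]
  · have : NeZero n := ⟨hn⟩
    simp only [Bfun, meanV_add_const, add_sub_add_right_eq_sub]

theorem Bfun_zero : Bfun (0 : Fin n → ℝ) = 0 := by
  simp [Bfun, meanV]

theorem Bfun_pos {f : Fin n → ℝ} (hmean : meanV f = 0) (hf : f ≠ 0) : 0 < Bfun f := by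
  obtain ⟨i, hi⟩ := Function.ne_iff.1 hf
  rw [Bfun, hmean]
  exact sum_pos' (fun j _ => abs_nonneg _) ⟨i, mem_univ _, by simpa using hi⟩

theorem TVfun_sub_const (w : Fin n → Fin n → ℝ) (f : Fin n → ℝ) (t : ℝ) :
    TVfun w (fun i => f i - t) = TVfun w f := by
  simp only [TVfun, sub_sub_sub_cancel_right]

theorem TVfun_zero (w : Fin n → Fin n → ℝ) : TVfun w 0 = 0 := by
  simp [TVfun]

theorem TVfun_pos {w : Fin n → Fin n → ℝ} (hnn : ∀ i j, 0 ≤ w i j) {f : Fin n → ℝ}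
    {i j : Fin n} (hw : 0 < w i j) (hf : f i ≠ f j) : 0 < TVfun w f := by
  have hterm : ∀ a b, 0 ≤ w a b * |f a - f b| := fun a b => mul_nonneg (hnn a b) (abs_nonneg _)
  have hrow : 0 < ∑ b, w i b * |f i - f b| := sum_pos' (fun b _ => hterm i b)
    ⟨j, mem_univ _, mul_pos hw (abs_pos.2 (sub_ne_zero.2 hf))⟩
  exact mul_pos one_half_pos
    (sum_pos' (fun a _ => sum_nonneg fun b _ => hterm a b) ⟨i, mem_univ _, hrow⟩)

theorem TVfun_pos_of_nonconstant {w : Fin n → Fin n → ℝ} (hnn : ∀ i j, 0 ≤ w i j)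
    (hconn : GraphConnected w) {f : Fin n → ℝ} (hf : Nonconstant f) : 0 < TVfun w f := by
  obtain ⟨i, j, hw, hij⟩ := hconn.exists_pos_weight_of_nonconstant hf
  exact TVfun_pos hnn hw hij

end Functionals

namespace IsSubgradient

variable {n : ℕ} {F : (Fin n → ℝ) → ℝ} {f v : Fin n → ℝ}

theorem sum_eq_zero (hv : IsSubgradient F f v)
    (hF : ∀ t, F (fun i => f i + t) = F f) : ∑ i, v i = 0 := by
  have key : ∀ t, (∑ i, v i) * t ≤ 0 := fun t => by
    have := hv (fun i => f i + t)
    simp only [hF, dotV, Pi.sub_apply, add_sub_cancel_left, ← sum_mul] at this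
    linarith
  linarith [key 1, key (-1)]

theorem le_dotV_self (hv : IsSubgradient F f v) (hF : F 0 = 0) : F f ≤ dotV v f := by
  have := hv 0
  simp only [hF, zero_sub, dotV, Pi.neg_apply, mul_neg, sum_neg_distrib] at this
  rw [dotV]
  linarith

end IsSubgradient

theorem add_smul_ne_zero_of_dotV_pos {n : ℕ} {f v : Fin n → ℝ} {c : ℝ} (hc : 0 ≤ c)
    (hvf : 0 < dotV v f) : f + c • v ≠ 0 := by
  intro h0
  have hf : f ≠ 0 := by
    rintro rfl
    simp [dotV] at hvf
  have hdot : dotV (f + c • v) f = norm2 f ^ 2 + c * dotV v f := by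
    rw [norm2_sq]
    simp only [dotV, Pi.add_apply, Pi.smul_apply, smul_eq_mul, add_mul, sum_add_distrib, mul_sum,
      sq, mul_assoc]
  have hzero : dotV (f + c • v) f = 0 := by rw [h0]; simp [dotV]
  have := norm2_sq_pos hf
  nlinarith [mul_nonneg hc hvf.le]

section Prox

variable {n : ℕ} (w : Fin n → Fin n → ℝ) (lam c : ℝ)

noncomputable def proxObjective (g u : Fin n → ℝ) : ℝ :=
  TVfun w u + lam * norm2 (u - g) ^ 2 / (2 * c)

variable {w lam c}

theorem norm2_sub_const_sub_sq {g : Fin n → ℝ} (hg : ∑ i, g i = 0) (u : Fin n → ℝ) (t : ℝ) :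
    norm2 ((fun i => u i - t) - g) ^ 2 = norm2 (u - g) ^ 2 - 2 * t * ∑ i, u i + n * t ^ 2 := by
  have hexp : ∀ i, (u i - t - g i) ^ 2 = (u i - g i) ^ 2 - 2 * t * u i + t ^ 2 + 2 * t * g i :=
    fun i => by ring
  simp only [norm2_sq, Pi.sub_apply, hexp, sum_add_distrib, sum_sub_distrib, ← mul_sum, hg,
    sum_const, card_univ, Fintype.card_fin, nsmul_eq_mul]
  ring

theorem meanV_eq_zero_of_forall_proxObjective_le (hlam : 0 < lam) (hc : 0 < c)
    {g h : Fin n → ℝ} (hg : ∑ i, g i = 0)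
    (hmin : ∀ u, proxObjective w lam c g h ≤ proxObjective w lam c g u) : meanV h = 0 := by
  have hshift := hmin (fun i => h i - meanV h)
  rw [proxObjective, proxObjective, TVfun_sub_const, norm2_sub_const_sub_sq hg,
    sum_eq_mul_meanV, add_le_add_iff_left, div_le_div_iff_of_pos_right (by positivity),
    mul_le_mul_iff_right₀ hlam] at hshift
  rcases eq_or_ne n 0 with rfl | hn
  · simp [meanV]
  · have hsq : (n : ℝ) * meanV h ^ 2 ≤ 0 := by linarith
    exact pow_eq_zero_iff two_ne_zero |>.1 <| le_antisymm
      (nonpos_of_mul_nonpos_right hsq (Nat.cast_pos.2 (Nat.pos_of_ne_zero hn))) (sq_nonneg _)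

theorem proxObjective_lt_proxObjective_zero (hlam : 0 < lam) (hc : 0 < c) {f v : Fin n → ℝ}
    (hf : f ≠ 0) (hT : TVfun w f ≤ lam * dotV v f) :
    proxObjective w lam c (f + c • v) f < proxObjective w lam c (f + c • v) 0 := by
  have hexp : norm2 (0 - (f + c • v)) ^ 2
      = norm2 (f - (f + c • v)) ^ 2 + (norm2 f ^ 2 + 2 * c * dotV v f) := by
    simp only [norm2_sq, dotV, Pi.sub_apply, Pi.add_apply, Pi.smul_apply, smul_eq_mul,
      Pi.zero_apply, mul_sum, ← sum_add_distrib]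
    exact sum_congr rfl fun i _ => by ring
  have hgain : lam * (norm2 f ^ 2 + 2 * c * dotV v f) / (2 * c)
      = lam * norm2 f ^ 2 / (2 * c) + lam * dotV v f := by
    field_simp
  have hpos : 0 < lam * norm2 f ^ 2 / (2 * c) := by
    have := norm2_sq_pos hf
    positivity
  rw [proxObjective, proxObjective, TVfun_zero, hexp, mul_add, add_div, hgain]
  linarith

end Prox

theorem stmt10_general {n : ℕ} (w : Fin n → Fin n → ℝ)
    (hnn : ∀ i j, 0 ≤ w i j)
    (hconn : GraphConnected w) (c : ℝ) (hc : 0 < c)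
    (f v g h : Fin n → ℝ) (hmean : meanV f = 0) (hnz : f ≠ 0)
    (hv : IsSubgradient Bfun f v) (hg : g = f + c • v)
    (hh : ∀ u : Fin n → ℝ,
      TVfun w h + Efun w f * norm2 (h - g)^2 / (2*c)
        ≤ TVfun w u + Efun w f * norm2 (u - g)^2 / (2*c)) :
    meanV g = 0 ∧ g ≠ 0 ∧ meanV h = 0 ∧ h ≠ 0 := by
  have hsv : ∑ i, v i = 0 := hv.sum_eq_zero (Bfun_add_const f)
  have hsg : ∑ i, g i = 0 := by
    simp [hg, sum_add_distrib, ← mul_sum, meanV_eq_zero_iff.1 hmean, hsv]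
  have hBv : Bfun f ≤ dotV v f := hv.le_dotV_self Bfun_zero
  have hB : 0 < Bfun f := Bfun_pos hmean hnz
  have hE : 0 < Efun w f :=
    div_pos (TVfun_pos_of_nonconstant hnn hconn (nonconstant_of_meanV_eq_zero hmean hnz)) hB
  have hTv : TVfun w f ≤ Efun w f * dotV v f := by
    calc TVfun w f = Efun w f * Bfun f := (div_mul_cancel₀ _ hB.ne').symm
      _ ≤ Efun w f * dotV v f := mul_le_mul_of_nonneg_left hBv hE.le
  refine ⟨meanV_eq_zero_iff.2 hsg, hg ▸ add_smul_ne_zero_of_dotV_pos hc.le (hB.trans_le hBv),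
    meanV_eq_zero_of_forall_proxObjective_le hE hc hsg hh, ?_⟩
  rintro rfl
  subst hg
  exact (hh f).not_gt (proxObjective_lt_proxObjective_zero hE hc hnz hTv)

theorem stmt10 {n : ℕ} (w : Fin n → Fin n → ℝ)
    (hsym : ∀ i j, w i j = w j i) (hnn : ∀ i j, 0 ≤ w i j)
    (hconn : GraphConnected w) (c : ℝ) (hc : 0 < c)
    (f v g h : Fin n → ℝ) (hmean : meanV f = 0) (hnz : f ≠ 0)
    (hv : IsSubgradient Bfun f v) (hg : g = f + c • v)
    (hh : ∀ u : Fin n → ℝ,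
      TVfun w h + Efun w f * norm2 (h - g)^2 / (2*c)
        ≤ TVfun w u + Efun w f * norm2 (u - g)^2 / (2*c)) :
    meanV g = 0 ∧ g ≠ 0 ∧ meanV h = 0 ∧ h ≠ 0 :=
  stmt10_general w hnn hconn c hc f v g h hmean hnz hv hg hh
end

section
/- The set-valued map Y^c(f) = f + c·∂B(f) is a closed set-valued map from K₁ = {u : ‖u‖₂ = 1, m(u) = 0} into K₂ = {u : 1 ≤ ‖u‖₂ ≤ 1 + 2c√n, m(u) = 0}. -/
open Finset Filter Topology

def K1set (n : ℕ) : Set (Fin n → ℝ) := {u | norm2 u = 1 ∧ meanV u = 0}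
def K2set (n : ℕ) (c : ℝ) : Set (Fin n → ℝ) :=
  {u | 1 ≤ norm2 u ∧ norm2 u ≤ 1 + 2*c*Real.sqrt n ∧ meanV u = 0}

lemma norm2_nonneg {n : ℕ} (f : Fin n → ℝ) : 0 ≤ norm2 f := Real.sqrt_nonneg _

lemma sq_norm2 {n : ℕ} (f : Fin n → ℝ) : (norm2 f)^2 = ∑ i, (f i)^2 :=
  Real.sq_sqrt (Finset.sum_nonneg fun i _ => sq_nonneg _)

lemma cauchy {n : ℕ} (u v : Fin n → ℝ) : dotV u v ≤ norm2 u * norm2 v := by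
  have h := sum_mul_sq_le_sq_mul_sq Finset.univ u v
  have h2 : dotV u v ≤ |dotV u v| := le_abs_self _
  refine h2.trans ?_
  have : |dotV u v| = Real.sqrt ((dotV u v)^2) := (Real.sqrt_sq_eq_abs _).symm
  rw [this, ← Real.sqrt_mul_self (mul_nonneg (norm2_nonneg u) (norm2_nonneg v))]
  apply Real.sqrt_le_sqrt
  calc (dotV u v)^2 ≤ (∑ i, (u i)^2) * ∑ i, (v i)^2 := h
    _ = (norm2 u * norm2 v) * (norm2 u * norm2 v) := by
        rw [← sq_norm2, ← sq_norm2]; ring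

lemma dotV_self {n : ℕ} (v : Fin n → ℝ) : dotV v v = (norm2 v)^2 := by
  rw [sq_norm2]; unfold dotV; exact Finset.sum_congr rfl fun i _ => (sq (v i)).symm ▸ by ring

lemma l1_le_sqrt_n {n : ℕ} (v : Fin n → ℝ) : ∑ i, |v i| ≤ Real.sqrt n * norm2 v := by
  have h := cauchy (fun _ : Fin n => (1:ℝ)) (fun i => |v i|)
  have h1 : dotV (fun _ : Fin n => (1:ℝ)) (fun i => |v i|) = ∑ i, |v i| := by
    unfold dotV; simp
  have h2 : norm2 (fun _ : Fin n => (1:ℝ)) = Real.sqrt n := by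
    unfold norm2; simp
  have h3 : norm2 (fun i => |v i|) = norm2 v := by
    unfold norm2; congr 1; exact Finset.sum_congr rfl fun i _ => sq_abs _
  rw [h1, h2, h3] at h; exact h

lemma meanV_add {n : ℕ} (f g : Fin n → ℝ) : meanV (f + g) = meanV f + meanV g := by
  unfold meanV
  rw [← add_div]; congr 1; simp [Finset.sum_add_distrib]

lemma Bfun_nonneg {n : ℕ} (f : Fin n → ℝ) : 0 ≤ Bfun f :=
  Finset.sum_nonneg fun i _ => abs_nonneg _

lemma Bfun_le {n : ℕ} (v : Fin n → ℝ) : Bfun v ≤ 2 * Real.sqrt n * norm2 v := by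
  have key : Bfun v ≤ 2 * ∑ i, |v i| := by
    rcases Nat.eq_zero_or_pos n with h0 | hn
    · subst h0; unfold Bfun; simp
    have hm : (n:ℝ) * |meanV v| ≤ ∑ i, |v i| := by
      unfold meanV
      rw [abs_div, abs_of_nonneg (by positivity : (0:ℝ) ≤ (n:ℝ))]
      rw [mul_div_cancel₀ _ (by positivity : (n:ℝ) ≠ 0)]
      exact Finset.abs_sum_le_sum_abs _ _
    calc Bfun v ≤ ∑ i, (|v i| + |meanV v|) := by
          apply Finset.sum_le_sum; intro i _
          exact (abs_sub _ _).trans (by rfl)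
      _ = (∑ i, |v i|) + n * |meanV v| := by
          rw [Finset.sum_add_distrib]; simp [mul_comm]
      _ ≤ 2 * ∑ i, |v i| := by linarith
  calc Bfun v ≤ 2 * ∑ i, |v i| := key
    _ ≤ 2 * (Real.sqrt n * norm2 v) := by
        have := l1_le_sqrt_n v; linarith
    _ = 2 * Real.sqrt n * norm2 v := by ring

lemma Bfun_shift_le {n : ℕ} (f v : Fin n → ℝ) : Bfun (f + v) ≤ Bfun f + Bfun v := by
  unfold Bfun
  rw [← Finset.sum_add_distrib]
  apply Finset.sum_le_sum; intro i _
  rw [meanV_add]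
  calc |(f + v) i - (meanV f + meanV v)| = |(f i - meanV f) + (v i - meanV v)| := by
        rw [Pi.add_apply]; ring_nf
    _ ≤ _ := abs_add_le _ _

lemma norm2_triangle {n : ℕ} (f g : Fin n → ℝ) : norm2 (f + g) ≤ norm2 f + norm2 g := by
  have h : (norm2 (f+g))^2 ≤ (norm2 f + norm2 g)^2 := by
    rw [sq_norm2]
    have hcs := cauchy f g
    have : ∑ i, ((f+g) i)^2 = (∑ i, (f i)^2) + 2 * dotV f g + ∑ i, (g i)^2 := by
      unfold dotV
      rw [Finset.mul_sum, ← Finset.sum_add_distrib, ← Finset.sum_add_distrib]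
      apply Finset.sum_congr rfl; intro i _; simp [Pi.add_apply]; ring
    rw [this, ← sq_norm2, ← sq_norm2]
    nlinarith
  nlinarith [norm2_nonneg (f+g), norm2_nonneg f, norm2_nonneg g]

lemma dotV_smul_add {n : ℕ} (f v : Fin n → ℝ) (c : ℝ) :
    dotV (f + c • v) f = dotV f f + c * dotV v f := by
  unfold dotV
  rw [Finset.mul_sum, ← Finset.sum_add_distrib]
  apply Finset.sum_congr rfl; intro i _; simp [Pi.add_apply]; ring

lemma subgrad_sum_zero {n : ℕ} (hn : 0 < n) (f v : Fin n → ℝ)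
    (hv : IsSubgradient Bfun f v) : ∑ i, v i = 0 := by
  have key : ∀ t : ℝ, t * ∑ i, v i ≤ 0 := by
    intro t
    have h := hv (f + (fun _ => t))
    have hm : meanV (f + (fun _ => t)) = meanV f + t := by
      rw [meanV_add]; congr 1; unfold meanV
      simp [Finset.sum_const, mul_div_assoc]
      field_simp
    have hB : Bfun (f + (fun _ => t)) = Bfun f := by
      unfold Bfun; rw [hm]  -- ?
      apply Finset.sum_congr rfl; intro i _; simp [Pi.add_apply]
    have hd : dotV v ((f + (fun _ => t)) - f) = t * ∑ i, v i := by
      unfold dotV; rw [Finset.mul_sum]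
      apply Finset.sum_congr rfl; intro i _; simp [Pi.add_apply]; ring
    rw [hB, hd] at h; linarith
  have h1 := key 1; have h2 := key (-1); linarith

lemma subgrad_dot_f {n : ℕ} (f v : Fin n → ℝ) (hv : IsSubgradient Bfun f v) :
    dotV v f = Bfun f := by
  have h0 := hv 0
  have h2 := hv (f + f)
  have hB0 : Bfun (0 : Fin n → ℝ) = 0 := by unfold Bfun meanV; simp
  have hd0 : dotV v ((0 : Fin n → ℝ) - f) = -dotV v f := by
    unfold dotV; rw [← Finset.sum_neg_distrib]
    apply Finset.sum_congr rfl; intro i _; simp [Pi.sub_apply]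
  have hB2 : Bfun (f + f) = 2 * Bfun f := by
    unfold Bfun
    rw [meanV_add, Finset.mul_sum]
    apply Finset.sum_congr rfl; intro i _
    rw [Pi.add_apply]
    rw [show f i + f i - (meanV f + meanV f) = 2 * (f i - meanV f) by ring, abs_mul]
    simp
  have hd2 : dotV v ((f + f) - f) = dotV v f := by
    congr 1; abel
  rw [hB0, hd0] at h0
  rw [hB2, hd2] at h2
  linarith

lemma subgrad_norm_le {n : ℕ} (f v : Fin n → ℝ) (hv : IsSubgradient Bfun f v) :
    norm2 v ≤ 2 * Real.sqrt n := by
  have h := hv (f + v)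
  have hd : dotV v ((f + v) - f) = (norm2 v)^2 := by
    rw [show (f + v) - f = v by abel, dotV_self]
  rw [hd] at h
  have hle : (norm2 v)^2 ≤ Bfun v := by
    have := Bfun_shift_le f v; linarith
  have h2 : (norm2 v)^2 ≤ 2 * Real.sqrt n * norm2 v := hle.trans (Bfun_le v)
  rcases eq_or_lt_of_le (norm2_nonneg v) with h0 | h0
  · rw [← h0]; positivity
  · nlinarith

lemma norm2_const_smul {n : ℕ} (c : ℝ) (v : Fin n → ℝ) : norm2 (c • v) = |c| * norm2 v := by
  unfold norm2
  rw [← Real.sqrt_sq_eq_abs, ← Real.sqrt_mul (sq_nonneg c), Finset.mul_sum]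
  congr 1
  apply Finset.sum_congr rfl; intro i _; simp [Pi.smul_apply]; ring
lemma cont_meanV {n : ℕ} : Continuous (meanV (n := n)) := by
  unfold meanV
  exact (continuous_finset_sum _ fun i _ => continuous_apply i).div_const _

lemma cont_Bfun {n : ℕ} : Continuous (Bfun (n := n)) := by
  unfold Bfun
  exact continuous_finset_sum _ fun i _ => ((continuous_apply i).sub cont_meanV).abs

lemma cont_norm2 {n : ℕ} : Continuous (norm2 (n := n)) := by
  unfold norm2
  exact Real.continuous_sqrt.comp (continuous_finset_sum _ fun i _ => (continuous_apply i).pow 2)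


theorem stmt14 {n : ℕ} (c : ℝ) (hc : 0 < c) :
    (∀ f ∈ K1set n, ∀ v : Fin n → ℝ, IsSubgradient Bfun f v → f + c • v ∈ K2set n c) ∧
    IsClosed {p : (Fin n → ℝ) × (Fin n → ℝ) |
      p.1 ∈ K1set n ∧ ∃ v : Fin n → ℝ, IsSubgradient Bfun p.1 v ∧ p.2 = p.1 + c • v} := by
  constructor
  · rintro f ⟨hf1, hf2⟩ v hv
    have hn : 0 < n := by
      by_contra h
      push_neg at h
      interval_cases n
      unfold norm2 at hf1; simp at hf1
    have hvsum := subgrad_sum_zero hn f v hv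
    have hvf := subgrad_dot_f f v hv
    have hvn := subgrad_norm_le f v hv
    have hff : dotV f f = 1 := by rw [dotV_self, hf1]; norm_num
    refine ⟨?_, ?_, ?_⟩
    · have hdot : dotV (f + c • v) f = 1 + c * Bfun f := by
        rw [dotV_smul_add, hff, hvf]
      have hcs := cauchy (f + c • v) f
      rw [hdot, hf1, mul_one] at hcs
      have := Bfun_nonneg f
      nlinarith
    · calc norm2 (f + c • v) ≤ norm2 f + norm2 (c • v) := norm2_triangle f (c • v)
        _ = 1 + c * norm2 v := by rw [hf1, norm2_const_smul, abs_of_pos hc]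
        _ ≤ 1 + 2*c*Real.sqrt n := by nlinarith
    · rw [meanV_add f (c • v)]
      have : meanV (c • v) = 0 := by
        unfold meanV
        rw [show ∑ i, (c • v) i = c * ∑ i, v i by
          rw [Finset.mul_sum]; exact Finset.sum_congr rfl fun i _ => by simp]
        rw [hvsum]; simp
      rw [hf2, this, add_zero]
  · have hset : {p : (Fin n → ℝ) × (Fin n → ℝ) |
        p.1 ∈ K1set n ∧ ∃ v : Fin n → ℝ, IsSubgradient Bfun p.1 v ∧ p.2 = p.1 + c • v} =
        ({p : (Fin n → ℝ) × (Fin n → ℝ) | norm2 p.1 = 1} ∩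
         {p : (Fin n → ℝ) × (Fin n → ℝ) | meanV p.1 = 0}) ∩
        ⋂ y : Fin n → ℝ, {p : (Fin n → ℝ) × (Fin n → ℝ) |
          Bfun p.1 + dotV (c⁻¹ • (p.2 - p.1)) (y - p.1) ≤ Bfun y} := by
      ext p
      simp only [Set.mem_setOf_eq, Set.mem_inter_iff, Set.mem_iInter, K1set]
      constructor
      · rintro ⟨⟨h1, h2⟩, v, hv, hp⟩
        refine ⟨⟨h1, h2⟩, fun y => ?_⟩
        have hveq : c⁻¹ • (p.2 - p.1) = v := by
          rw [hp, add_sub_cancel_left, smul_smul, inv_mul_cancel₀ hc.ne', one_smul]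
        rw [hveq]; exact hv y
      · rintro ⟨⟨h1, h2⟩, hy⟩
        exact ⟨⟨h1, h2⟩, c⁻¹ • (p.2 - p.1), hy,
          by rw [smul_smul, mul_inv_cancel₀ hc.ne', one_smul]; abel⟩
    rw [hset]
    refine IsClosed.inter (IsClosed.inter ?_ ?_) (isClosed_iInter fun y => ?_)
    · exact isClosed_eq (cont_norm2.comp continuous_fst) continuous_const
    · exact isClosed_eq (cont_meanV.comp continuous_fst) continuous_const
    · refine isClosed_le ?_ continuous_const
      apply Continuous.add (cont_Bfun.comp continuous_fst)
      unfold dotV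
      apply continuous_finset_sum
      intro i _
      apply Continuous.mul
      · simp only [Pi.smul_apply, Pi.sub_apply, smul_eq_mul]
        exact continuous_const.mul (((continuous_apply i).comp continuous_snd).sub
          ((continuous_apply i).comp continuous_fst))
      · exact Continuous.sub continuous_const ((continuous_apply i).comp continuous_fst)
end
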